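/- For every n ≥ 4, the subspaces V_5 = {A ∈ ℝ^{n×n} : A = −Aᵀ, A·1_n = 0} and V_6 = {A ∈ ℝ^{n×n} : A = Aᵀ, A·1_n = 0, A_{ii} = 0 for all i} are irreducible S_n-subrepresentations of ℝ^{n×n}: each is nonzero, invariant under the action (σ·X)_{ij} = X_{σ⁻¹(i),σ⁻¹(j)}, and has no invariant subspaces other than the zero subspace and itself. -/

import Mathlib

open Matrix

namespace GraphIrred

variable (n : ℕ)

/-- The action of `Sₙ` on `n × n` matrices: `(σ · X) i j = X (σ⁻¹ i) (σ⁻¹ j)`. -/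
def act (σ : Equiv.Perm (Fin n)) (X : Matrix (Fin n) (Fin n) ℝ) :
    Matrix (Fin n) (Fin n) ℝ :=
  Matrix.of fun i j => X (σ⁻¹ i) (σ⁻¹ j)

/-- A subspace of `ℝⁿˣⁿ` is invariant if it is closed under the `Sₙ`-action. -/
def Invariant (U : Submodule ℝ (Matrix (Fin n) (Fin n) ℝ)) : Prop :=
  ∀ (σ : Equiv.Perm (Fin n)) (X : Matrix (Fin n) (Fin n) ℝ), X ∈ U → act n σ X ∈ U

/-- `V₅`: antisymmetric matrices whose rows sum to zero. -/
def V5 : Submodule ℝ (Matrix (Fin n) (Fin n) ℝ) where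
  carrier := {X | X = -Xᵀ ∧ ∀ i, ∑ j, X i j = 0}
  zero_mem' := ⟨by simp, by simp⟩
  add_mem' := by
    rintro X Y ⟨hX1, hX2⟩ ⟨hY1, hY2⟩
    refine ⟨?_, fun i => ?_⟩
    · rw [Matrix.transpose_add, neg_add]
      exact congrArg₂ (· + ·) hX1 hY1
    · simp [Matrix.add_apply, Finset.sum_add_distrib, hX2 i, hY2 i]
  smul_mem' := by
    rintro c X ⟨hX1, hX2⟩
    refine ⟨?_, fun i => ?_⟩
    · rw [Matrix.transpose_smul, ← smul_neg]
      exact congrArg (c • ·) hX1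
    · simp [Matrix.smul_apply, ← Finset.mul_sum, hX2 i]

/-- `V₆`: symmetric matrices with zero diagonal whose rows sum to zero. -/
def V6 : Submodule ℝ (Matrix (Fin n) (Fin n) ℝ) where
  carrier := {X | X = Xᵀ ∧ (∀ i, ∑ j, X i j = 0) ∧ ∀ i, X i i = 0}
  zero_mem' := ⟨by simp, by simp, by simp⟩
  add_mem' := by
    rintro X Y ⟨hX1, hX2, hX3⟩ ⟨hY1, hY2, hY3⟩
    refine ⟨?_, fun i => ?_, fun i => ?_⟩
    · rw [Matrix.transpose_add]
      exact congrArg₂ (· + ·) hX1 hY1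
    · simp [Matrix.add_apply, Finset.sum_add_distrib, hX2 i, hY2 i]
    · simp [Matrix.add_apply, hX3 i, hY3 i]
  smul_mem' := by
    rintro c X ⟨hX1, hX2, hX3⟩
    refine ⟨?_, fun i => ?_, fun i => ?_⟩
    · rw [Matrix.transpose_smul]
      exact congrArg (c • ·) hX1
    · simp [Matrix.smul_apply, ← Finset.mul_sum, hX2 i]
    · simp [Matrix.smul_apply, hX3 i]

/-!
`V₅` and `V₆` are the spaces of matrices with `Xᵀ = ε X`, zero diagonal and zero row sums, for
`ε = -1` and `ε = 1`, and the argument is uniform in `ε`.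

For distinct `i, j, k, l`, the group-algebra element `(1 - (i k)) (1 - (j l))` sends such an `X`
to its cross difference `X i j - X k j - X i l + X k l` times the fixed matrix
`G = (eᵢ - eₖ)(eⱼ - eₗ)ᵀ + ε (eⱼ - eₗ)(eᵢ - eₖ)ᵀ`, and `Sₙ` permutes these matrices `G` transitively.
Summing over all injective quadruples gives `∑ c_X G = 4 (n² - 3n + 1 + ε)(1 + ε²) X`, a nonzero
multiple of `X` when `n ≥ 4`. So a nonzero invariant `W` contains an `X` with a nonzero cross
difference, hence one `G`, hence every `G`, hence, by the same identity, the whole space.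
-/

open Finset Equiv

variable {n : ℕ}

theorem injective_vec4_iff {α : Type*} {a b c d : α} :
    Function.Injective ![a, b, c, d] ↔ a ≠ b ∧ a ≠ c ∧ a ≠ d ∧ b ≠ c ∧ b ≠ d ∧ c ≠ d := by
  refine ⟨fun h => ⟨h.ne (a₁ := 0) (a₂ := 1) (by decide), h.ne (a₁ := 0) (a₂ := 2) (by decide),
    h.ne (a₁ := 0) (a₂ := 3) (by decide), h.ne (a₁ := 1) (a₂ := 2) (by decide),
    h.ne (a₁ := 1) (a₂ := 3) (by decide), h.ne (a₁ := 2) (a₂ := 3) (by decide)⟩,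
    fun h x y hxy => ?_⟩
  fin_cases x <;> fin_cases y <;> simp_all [eq_comm]

theorem sum_sum_sum_reverse {α β M : Type*} [Fintype α] [Fintype β] [AddCommMonoid M]
    (f : α → β → α → M) : ∑ a, ∑ b, ∑ c, f a b c = ∑ a, ∑ b, ∑ c, f c b a := by
  rw [sum_comm_cycle]
  exact sum_congr rfl fun _ _ => sum_comm

theorem act_apply (σ : Perm (Fin n)) (X : Matrix (Fin n) (Fin n) ℝ) (p q : Fin n) :
    act n σ X p q = X (σ⁻¹ p) (σ⁻¹ q) := rfl

section Balanced

variable (n) in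
def balanced (ε : ℝ) : Submodule ℝ (Matrix (Fin n) (Fin n) ℝ) where
  carrier := {X | Xᵀ = ε • X ∧ (∀ i, ∑ j, X i j = 0) ∧ ∀ i, X i i = 0}
  zero_mem' := by simp
  add_mem' := by
    rintro X Y ⟨hX, hX', hX''⟩ ⟨hY, hY', hY''⟩
    exact ⟨by rw [transpose_add, hX, hY, smul_add], fun i => by simp [sum_add_distrib, *],
      fun i => by simp [*]⟩
  smul_mem' := by
    rintro c X ⟨hX, hX', hX''⟩
    exact ⟨by rw [transpose_smul, hX, smul_comm], fun i => by simp [← mul_sum, *],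
      fun i => by simp [*]⟩

theorem V5_eq_balanced : V5 n = balanced n (-1) := by
  ext X
  refine ⟨fun ⟨hX, hrow⟩ => ⟨?_, hrow, fun i => ?_⟩, fun ⟨hX, hrow, _⟩ => ⟨?_, hrow⟩⟩
  · conv_rhs => rw [neg_one_smul, hX]
    rw [neg_neg]
  · have := congrFun (congrFun hX i) i
    simp only [Matrix.neg_apply, transpose_apply] at this
    linarith
  · rw [hX, neg_one_smul, neg_neg]

theorem V6_eq_balanced : V6 n = balanced n 1 := by
  ext X
  simp only [V6, balanced, one_smul, Submodule.mem_mk, AddSubmonoid.mem_mk,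
    AddSubsemigroup.mem_mk, Set.mem_ofPred_eq, eq_comm (a := X)]

theorem balanced_invariant (ε : ℝ) : Invariant n (balanced n ε) := by
  rintro σ X ⟨hX, hrow, hdiag⟩
  refine ⟨?_, fun p => ?_, fun p => hdiag _⟩
  · ext p q
    exact congrFun (congrFun hX _) _
  · simp only [act_apply]
    exact (Equiv.sum_comp σ⁻¹ (X (σ⁻¹ p))).trans (hrow _)

variable {ε : ℝ} {X : Matrix (Fin n) (Fin n) ℝ}

theorem balanced_apply_comm (hX : X ∈ balanced n ε) (p q : Fin n) : X q p = ε * X p q :=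
  congrFun (congrFun hX.1 p) q

theorem balanced_sum_col (hX : X ∈ balanced n ε) (q : Fin n) : ∑ p, X p q = 0 := by
  simp only [balanced_apply_comm hX q, ← mul_sum, hX.2.1 q, mul_zero]

end Balanced

section CrossDifference

def crossDiff (X : Matrix (Fin n) (Fin n) ℝ) (i j k l : Fin n) : ℝ :=
  X i j - X k j - X i l + X k l

theorem crossDiff_self_left (X : Matrix (Fin n) (Fin n) ℝ) (i j l : Fin n) :
    crossDiff X i j i l = 0 := by
  simp only [crossDiff]
  ring

theorem crossDiff_self_right (X : Matrix (Fin n) (Fin n) ℝ) (i j k : Fin n) :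
    crossDiff X i j k j = 0 := by
  simp only [crossDiff]
  ring

def crossOuter (i j k l : Fin n) : Matrix (Fin n) (Fin n) ℝ :=
  vecMulVec (Pi.single i 1 - Pi.single k 1) (Pi.single j 1 - Pi.single l 1)

def crossMatrix (ε : ℝ) (i j k l : Fin n) : Matrix (Fin n) (Fin n) ℝ :=
  crossOuter i j k l + ε • (crossOuter i j k l)ᵀ

theorem crossOuter_apply (i j k l p q : Fin n) :
    crossOuter i j k l p q =
      ((if p = i then 1 else 0) - if p = k then 1 else 0) *
        ((if q = j then 1 else 0) - if q = l then 1 else 0) := by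
  simp [crossOuter, vecMulVec_apply, Pi.single_apply]

theorem crossMatrix_apply (ε : ℝ) (i j k l p q : Fin n) :
    crossMatrix ε i j k l p q = crossOuter i j k l p q + ε * crossOuter i j k l q p := rfl

theorem act_swap_alternating_sum {i j k l : Fin n} (h : Function.Injective ![i, j, k, l])
    (Y : Matrix (Fin n) (Fin n) ℝ) :
    Y - act n (swap i k) Y - act n (swap j l) Y + act n (swap i k) (act n (swap j l) Y) =
      crossDiff Y i j k l • crossOuter i j k l + crossDiff Yᵀ i j k l • (crossOuter i j k l)ᵀ := by
  obtain ⟨hij, hik, hil, hjk, hjl, hkl⟩ := injective_vec4_iff.1 h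
  ext p q
  simp only [Matrix.sub_apply, Matrix.add_apply, Matrix.smul_apply, transpose_apply, act_apply,
    swap_inv, crossOuter_apply, crossDiff, smul_eq_mul]
  have hp : p = i ∨ p = j ∨ p = k ∨ p = l ∨ (p ≠ i ∧ p ≠ j ∧ p ≠ k ∧ p ≠ l) := by tauto
  have hq : q = i ∨ q = j ∨ q = k ∨ q = l ∨ (q ≠ i ∧ q ≠ j ∧ q ≠ k ∧ q ≠ l) := by tauto
  rcases hp with rfl | rfl | rfl | rfl | ⟨hp1, hp2, hp3, hp4⟩ <;>
    rcases hq with rfl | rfl | rfl | rfl | ⟨hq1, hq2, hq3, hq4⟩ <;>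
    simp only [swap_apply_left, swap_apply_right, swap_apply_of_ne_of_ne, ne_eq, not_false_eq_true,
      ite_true, ite_false, *, hij.symm, hik.symm, hil.symm, hjk.symm, hjl.symm, hkl.symm] <;> ring

theorem act_swap_alternating_sum_eq_smul_crossMatrix {ε : ℝ} {X : Matrix (Fin n) (Fin n) ℝ}
    (hX : Xᵀ = ε • X) {i j k l : Fin n} (h : Function.Injective ![i, j, k, l]) :
    X - act n (swap i k) X - act n (swap j l) X + act n (swap i k) (act n (swap j l) X) =
      crossDiff X i j k l • crossMatrix ε i j k l := by
  have hXT : crossDiff Xᵀ i j k l = ε * crossDiff X i j k l := by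
    simp only [hX, crossDiff, Matrix.smul_apply, smul_eq_mul]
    ring
  rw [act_swap_alternating_sum h, hXT, crossMatrix, smul_add, smul_smul, mul_comm]

theorem act_crossMatrix (σ : Perm (Fin n)) (ε : ℝ) (i j k l : Fin n) :
    act n σ (crossMatrix ε i j k l) = crossMatrix ε (σ i) (σ j) (σ k) (σ l) := by
  ext p q
  simp only [act_apply, crossMatrix_apply, crossOuter_apply, Perm.inv_eq_iff_eq]

theorem crossMatrix_mem_of_invariant {ε : ℝ} {W : Submodule ℝ (Matrix (Fin n) (Fin n) ℝ)}
    (hW : Invariant n W) {i j k l : Fin n} (h : Function.Injective ![i, j, k, l])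
    (hmem : crossMatrix ε i j k l ∈ W) {i' j' k' l' : Fin n}
    (h' : Function.Injective ![i', j', k', l']) : crossMatrix ε i' j' k' l' ∈ W := by
  obtain ⟨σ, hσ⟩ := Perm.exists_extending_pair _ _ h h'
  obtain ⟨rfl, rfl, rfl, rfl⟩ : σ i = i' ∧ σ j = j' ∧ σ k = k' ∧ σ l = l' :=
    ⟨hσ 0, hσ 1, hσ 2, hσ 3⟩
  simpa only [act_crossMatrix] using hW σ _ hmem

theorem crossMatrix_mem_balanced {ε : ℝ} (hε : ε * ε = 1) {i j k l : Fin n}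
    (h : Function.Injective ![i, j, k, l]) : crossMatrix ε i j k l ∈ balanced n ε := by
  obtain ⟨hij, hik, hil, hjk, hjl, hkl⟩ := injective_vec4_iff.1 h
  refine ⟨?_, fun p => ?_, fun p => ?_⟩
  · rw [crossMatrix, transpose_add, transpose_smul, transpose_transpose, smul_add, smul_smul, hε,
      one_smul, add_comm]
  · simp [crossMatrix_apply, crossOuter_apply, sum_add_distrib, mul_sub, sum_sub_distrib]
  · simp only [crossMatrix_apply, crossOuter_apply]
    rcases eq_or_ne p i with rfl | hpi
    · simp [hik, hij, hil]
    rcases eq_or_ne p k with rfl | hpk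
    · simp [hjk.symm, hkl]
    simp [hpi, hpk]

theorem crossMatrix_apply_self (ε : ℝ) {i j k l : Fin n} (h : Function.Injective ![i, j, k, l]) :
    crossMatrix ε i j k l i j = 1 := by
  obtain ⟨hij, hik, hil, hjk, hjl, hkl⟩ := injective_vec4_iff.1 h
  simp [crossMatrix_apply, crossOuter_apply, hij, hik, hjl, hij.symm, hjk]

end CrossDifference

section SpanningIdentity

def crossWeight (X : Matrix (Fin n) (Fin n) ℝ) (i j k l : Fin n) : ℝ :=
  if Function.Injective ![i, j, k, l] then crossDiff X i j k l else 0

theorem crossWeight_swap_left (X : Matrix (Fin n) (Fin n) ℝ) (i j k l : Fin n) :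
    crossWeight X k j i l = -crossWeight X i j k l := by
  have : Function.Injective ![k, j, i, l] ↔ Function.Injective ![i, j, k, l] := by
    simp only [injective_vec4_iff]; grind
  simp only [crossWeight, this]
  split_ifs <;> simp only [crossDiff, neg_zero]; ring

theorem crossWeight_swap_right (X : Matrix (Fin n) (Fin n) ℝ) (i j k l : Fin n) :
    crossWeight X i l k j = -crossWeight X i j k l := by
  have : Function.Injective ![i, l, k, j] ↔ Function.Injective ![i, j, k, l] := by
    simp only [injective_vec4_iff]; grind
  simp only [crossWeight, this]
  split_ifs <;> simp only [crossDiff, neg_zero]; ring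

theorem sum_crossWeight_mul_crossOuter (X : Matrix (Fin n) (Fin n) ℝ) (p q : Fin n) :
    ∑ i, ∑ j, ∑ k, ∑ l, crossWeight X i j k l * crossOuter i j k l p q =
      4 * ∑ k, ∑ l, crossWeight X p q k l := by
  set g : Fin n → Fin n → Fin n → Fin n → ℝ := fun i j k l =>
    crossWeight X i j k l * (if p = i then 1 else 0) * (if q = j then 1 else 0)
  -- the swaps `i ↔ k` and `j ↔ l` change the sign of the weight and permute the four terms
  have hpt : ∀ i j k l, crossWeight X i j k l * crossOuter i j k l p q =
      g i j k l + g k j i l + g i l k j + g k l i j := by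
    intro i j k l
    simp only [g, crossOuter_apply, crossWeight_swap_left X i j k l,
      crossWeight_swap_left X i l k j, crossWeight_swap_right X i j k l]
    ring
  have h13 : ∑ i, ∑ j, ∑ k, ∑ l, g k j i l = ∑ i, ∑ j, ∑ k, ∑ l, g i j k l :=
    sum_sum_sum_reverse fun i j k => ∑ l, g k j i l
  have h24 : ∑ i, ∑ j, ∑ k, ∑ l, g i l k j = ∑ i, ∑ j, ∑ k, ∑ l, g i j k l :=
    sum_congr rfl fun i _ => sum_sum_sum_reverse fun j k l => g i l k j
  have h1324 : ∑ i, ∑ j, ∑ k, ∑ l, g k l i j = ∑ i, ∑ j, ∑ k, ∑ l, g i j k l := by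
    rw [← h24]
    exact sum_sum_sum_reverse fun i j k => ∑ l, g k l i j
  have hg : ∑ i, ∑ j, ∑ k, ∑ l, g i j k l = ∑ k, ∑ l, crossWeight X p q k l := by
    simp [g, mul_ite, sum_ite_irrel, sum_ite_eq]
  simp only [hpt, sum_add_distrib, h13, h24, h1324, hg]
  ring

/-- Inclusion–exclusion; the coincidences `k = p` and `l = q` need no correction term because the
cross difference vanishes there. -/
theorem crossWeight_eq_of_ne {p q : Fin n} (hpq : p ≠ q) (X : Matrix (Fin n) (Fin n) ℝ)
    (k l : Fin n) :
    crossWeight X p q k l = crossDiff X p q k l - (if q = k then crossDiff X p q k l else 0)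
      - (if p = l then crossDiff X p q k l else 0)
      + (if q = k ∧ p = l then crossDiff X p q k l else 0)
      - (if k = l then crossDiff X p q k l else 0) := by
  simp only [crossWeight, injective_vec4_iff]
  by_cases hkp : p = k <;> by_cases hkq : q = k <;> by_cases hlp : p = l <;>
    by_cases hlq : q = l <;> by_cases hkl : k = l <;>
    simp_all [crossDiff_self_left, crossDiff_self_right]

variable {ε : ℝ} {X : Matrix (Fin n) (Fin n) ℝ}

theorem sum_crossWeight (hX : X ∈ balanced n ε) (p q : Fin n) :
    ∑ k, ∑ l, crossWeight X p q k l = ((n : ℝ) ^ 2 - 3 * n + 1 + ε) * X p q := by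
  rcases eq_or_ne p q with rfl | hpq
  · simp [crossWeight, injective_vec4_iff, hX.2.2]
  simp only [crossWeight_eq_of_ne hpq, sum_add_distrib, sum_sub_distrib, ite_and, sum_ite_eq,
    sum_ite_irrel]
  simp only [crossDiff, sum_add_distrib, sum_sub_distrib, sum_const, card_univ, Fintype.card_fin,
    nsmul_eq_mul, ← mul_sum, sum_ite_eq, mem_univ, ite_true, hX.2.1, balanced_sum_col hX, hX.2.2,
    balanced_apply_comm hX p q, mul_zero, sub_zero, add_zero]
  ring

theorem sum_crossWeight_smul_crossMatrix (hX : X ∈ balanced n ε) :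
    ∑ i, ∑ j, ∑ k, ∑ l, crossWeight X i j k l • crossMatrix ε i j k l =
      (4 * ((n : ℝ) ^ 2 - 3 * n + 1 + ε) * (1 + ε * ε)) • X := by
  ext p q
  simp only [Matrix.sum_apply, Matrix.smul_apply, crossMatrix_apply, smul_eq_mul, mul_add,
    sum_add_distrib, mul_left_comm _ ε, ← mul_sum, sum_crossWeight_mul_crossOuter,
    sum_crossWeight hX, balanced_apply_comm hX p q]
  ring

theorem exists_eq_smul_sum_crossWeight_smul_crossMatrix (hn : 4 ≤ n) (hε : ε * ε = 1)
    (hX : X ∈ balanced n ε) :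
    ∃ c : ℝ, X = c • ∑ i, ∑ j, ∑ k, ∑ l, crossWeight X i j k l • crossMatrix ε i j k l := by
  have hn' : (4 : ℝ) ≤ n := by exact_mod_cast hn
  have hε' : -1 ≤ ε := by nlinarith
  have hκ : 4 * ((n : ℝ) ^ 2 - 3 * n + 1 + ε) * (1 + ε * ε) ≠ 0 := by
    apply ne_of_gt
    nlinarith
  exact ⟨_, by rw [sum_crossWeight_smul_crossMatrix hX, inv_smul_smul₀ hκ]⟩

theorem exists_crossDiff_ne_zero (hn : 4 ≤ n) (hε : ε * ε = 1) (hX : X ∈ balanced n ε)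
    (hX0 : X ≠ 0) : ∃ i j k l, Function.Injective ![i, j, k, l] ∧ crossDiff X i j k l ≠ 0 := by
  by_contra! h
  have hw : ∀ i j k l, crossWeight X i j k l = 0 := fun i j k l => by
    unfold crossWeight
    split_ifs with hinj
    exacts [h i j k l hinj, rfl]
  obtain ⟨c, hc⟩ := exists_eq_smul_sum_crossWeight_smul_crossMatrix hn hε hX
  simp only [hw, zero_smul, sum_const_zero, smul_zero] at hc
  exact hX0 hc

theorem balanced_le_of_crossMatrix_mem (hn : 4 ≤ n) (hε : ε * ε = 1)
    {W : Submodule ℝ (Matrix (Fin n) (Fin n) ℝ)}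
    (hW : ∀ i j k l, Function.Injective ![i, j, k, l] → crossMatrix ε i j k l ∈ W) :
    balanced n ε ≤ W := by
  intro X hX
  obtain ⟨c, hc⟩ := exists_eq_smul_sum_crossWeight_smul_crossMatrix hn hε hX
  rw [hc]
  refine W.smul_mem _ (sum_mem fun i _ => sum_mem fun j _ => sum_mem fun k _ => sum_mem
    fun l _ => ?_)
  unfold crossWeight
  split_ifs with hinj
  · exact W.smul_mem _ (hW i j k l hinj)
  · rw [zero_smul]
    exact W.zero_mem

end SpanningIdentity

variable {ε : ℝ}

theorem eq_bot_or_eq_balanced (hn : 4 ≤ n) (hε : ε * ε = 1)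
    {W : Submodule ℝ (Matrix (Fin n) (Fin n) ℝ)} (hWV : W ≤ balanced n ε) (hW : Invariant n W) :
    W = ⊥ ∨ W = balanced n ε := by
  refine or_iff_not_imp_left.2 fun hW0 =>
    le_antisymm hWV (balanced_le_of_crossMatrix_mem hn hε ?_)
  obtain ⟨X, hXW, hX0⟩ := Submodule.exists_mem_ne_zero_of_ne_bot hW0
  obtain ⟨i, j, k, l, hinj, hc⟩ := exists_crossDiff_ne_zero hn hε (hWV hXW) hX0
  have hG : crossDiff X i j k l • crossMatrix ε i j k l ∈ W := by
    rw [← act_swap_alternating_sum_eq_smul_crossMatrix (hWV hXW).1 hinj]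
    exact W.add_mem (W.sub_mem (W.sub_mem hXW (hW _ _ hXW)) (hW _ _ hXW)) (hW _ _ (hW _ _ hXW))
  exact fun _ _ _ _ => crossMatrix_mem_of_invariant hW hinj ((W.smul_mem_iff hc).1 hG)

theorem balanced_ne_bot (hn : 4 ≤ n) (hε : ε * ε = 1) : balanced n ε ≠ ⊥ := by
  have h : Function.Injective ![(⟨0, by omega⟩ : Fin n), ⟨1, by omega⟩, ⟨2, by omega⟩,
      ⟨3, by omega⟩] := injective_vec4_iff.2 (by simp [Fin.ext_iff])
  refine (Submodule.ne_bot_iff _).2 ⟨_, crossMatrix_mem_balanced hε h, fun h0 => ?_⟩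
  simpa [h0] using crossMatrix_apply_self ε h

theorem balanced_irreducible (hn : 4 ≤ n) (hε : ε * ε = 1) :
    balanced n ε ≠ ⊥ ∧ Invariant n (balanced n ε) ∧
      ∀ W : Submodule ℝ (Matrix (Fin n) (Fin n) ℝ),
        W ≤ balanced n ε → Invariant n W → W = ⊥ ∨ W = balanced n ε :=
  ⟨balanced_ne_bot hn hε, balanced_invariant ε, fun _ => eq_bot_or_eq_balanced hn hε⟩

variable (n)

/-- For `n ≥ 4`, `V₅` and `V₆` are irreducible
`Sₙ`-subrepresentations of `ℝⁿˣⁿ`: each is nonzero, invariant, and has no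
invariant subspaces other than `⊥` and itself. -/
theorem V5_V6_irreducible (hn : 4 ≤ n) :
    (V5 n ≠ ⊥ ∧ Invariant n (V5 n) ∧
      ∀ W : Submodule ℝ (Matrix (Fin n) (Fin n) ℝ),
        W ≤ V5 n → Invariant n W → W = ⊥ ∨ W = V5 n) ∧
    (V6 n ≠ ⊥ ∧ Invariant n (V6 n) ∧
      ∀ W : Submodule ℝ (Matrix (Fin n) (Fin n) ℝ),
        W ≤ V6 n → Invariant n W → W = ⊥ ∨ W = V6 n) := by
  rw [V5_eq_balanced, V6_eq_balanced]
  exact ⟨balanced_irreducible hn (by norm_num), balanced_irreducible hn (by norm_num)⟩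

end GraphIrred
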